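/- With A(ψ) the (1|1)-dimensional module over the Ramond positive part SVir_0⁺ (spanned by L_n, n ≥ 1, and G_r, r ≥ 1; G_1 acts sending w to u), A(ψ) is simple if and only if ψ(L_2) ≠ 0. -/
import Mathlib


noncomputable section

/-- The action of `L_n` on the Ramond `A(ψ) = ℂw ⊕ ℂu` (`w = (1,0)` even, `u = (0,1)` odd). -/
def aL (ψL : ℤ → ℂ) (n : ℤ) : Module.End ℂ (ℂ × ℂ) := ψL n • (LinearMap.id)

/-- The action of `G_r` (`r ≥ 1`) on the Ramond `A(ψ)`: `G_1·w = u`, `G_1·u = ψ(L_2)w`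
(since `[G_1,G_1] = 2L_2`), and for `r ≥ 2`: `G_r·w = 0`, `G_r·u = 2ψ(L_{r+1})w`. -/
def bG (ψL : ℤ → ℂ) (r : ℤ) : Module.End ℂ (ℂ × ℂ) :=
  LinearMap.prod
    ((if r = 1 then ψL 2 else 2 * ψL (r + 1)) • LinearMap.snd ℂ ℂ ℂ)
    ((if r = 1 then (1 : ℂ) else 0) • LinearMap.fst ℂ ℂ ℂ)

/-- The even part `ℂw`. -/
def evenPart : Submodule ℂ (ℂ × ℂ) := Submodule.prod ⊤ ⊥

/-- The odd part `ℂu`. -/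
def oddPart : Submodule ℂ (ℂ × ℂ) := Submodule.prod ⊥ ⊤

/-- With `A(ψ)` the `(1|1)`-dimensional module over the Ramond positive part
`SVir_0⁺` (spanned by `L_n`, `n ≥ 1`, and `G_r`, `r ≥ 1`, acting as above, where
`ψ : p_0 → ℂ` is a Lie superalgebra homomorphism on the subalgebra spanned by `L_n`
(`n ≥ 1`) and `G_n` (`n ≥ 2`)), `A(ψ)` is simple if and only if `ψ(L_2) ≠ 0`. -/
theorem whittaker_stmt8 (ψL ψG : ℤ → ℂ)
    (hLL : ∀ m n : ℤ, 1 ≤ m → 1 ≤ n → ((m : ℂ) - (n : ℂ)) * ψL (m + n) = 0)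
    (hLG : ∀ m r : ℤ, 1 ≤ m → 2 ≤ r → ((m : ℂ)/2 - (r : ℂ)) * ψG (m + r) = 0)
    (hGG : ∀ r s : ℤ, 2 ≤ r → 2 ≤ s → (2 : ℂ) * ψL (r + s) = 0)
    (hparity : ∀ r : ℤ, 2 ≤ r → ψG r = 0) :
    (∀ W : Submodule ℂ (ℂ × ℂ),
      (∀ n : ℤ, 1 ≤ n → ∀ v ∈ W, aL ψL n v ∈ W) →
      (∀ r : ℤ, 1 ≤ r → ∀ v ∈ W, bG ψL r v ∈ W) →
      W = (W ⊓ evenPart) ⊔ (W ⊓ oddPart) → W = ⊥ ∨ W = ⊤)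
    ↔ ψL 2 ≠ 0 := by

  have hbG : ∀ r (v : ℂ × ℂ), bG ψL r v =
      ((if r = 1 then ψL 2 else 2 * ψL (r + 1)) * v.2,
       (if r = 1 then (1 : ℂ) else 0) * v.1) := by
    intro r v; rfl
  have hmemO : ∀ v : ℂ × ℂ, v ∈ oddPart ↔ v.1 = 0 := by
    intro v; simp [oddPart]
  have hmemE : ∀ v : ℂ × ℂ, v ∈ evenPart ↔ v.2 = 0 := by
    intro v; simp [evenPart]
  constructor
  · intro h
    intro h0
    have h3 : ψL 3 = 0 := by
      have := hLL 2 1 (by norm_num) (by norm_num)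
      norm_num at this; exact this
    have h4 : ∀ n : ℤ, 4 ≤ n → ψL n = 0 := by
      intro n hn
      have := hGG 2 (n - 2) (by norm_num) (by omega)
      have e : (2 : ℤ) + (n - 2) = n := by ring
      rw [e] at this
      simpa using this
    have := h oddPart
      (by intro n hn v hv; rw [hmemO] at hv ⊢; simp [aL, hv])
      (by
        intro r hr v hv
        rw [hmemO] at hv ⊢
        rw [hbG]
        by_cases hr1 : r = 1
        · simp [hr1, h0]
        · have : ψL (r + 1) = 0 := by
            rcases eq_or_lt_of_le hr with h' | h'
            · omega
            · rcases (by omega : r + 1 = 3 ∨ 4 ≤ r + 1) with h'' | h''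
              · rw [h'']; exact h3
              · exact h4 _ h''
          simp [hr1, this])
      (by
        have : oddPart ⊓ evenPart = (⊥ : Submodule ℂ (ℂ × ℂ)) := by
          apply le_bot_iff.mp
          intro v hv
          rw [Submodule.mem_inf, hmemO, hmemE] at hv
          simp [Prod.ext_iff, hv.1, hv.2]
        rw [this, inf_of_le_left (le_refl oddPart)]
        simp)
    rcases this with hb | ht
    · have : ((0 : ℂ), (1 : ℂ)) ∈ oddPart := by rw [hmemO]
      rw [hb] at this
      simp [Prod.ext_iff] at this
    · have : ((1 : ℂ), (0 : ℂ)) ∈ oddPart := ht ▸ Submodule.mem_top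
      rw [hmemO] at this
      simp at this
  · intro hne W hL hG hgrade
    by_cases hW : W = ⊥
    · left; exact hW
    · right
      obtain ⟨v, hvW, hv0⟩ := Submodule.exists_mem_ne_zero_of_ne_bot hW
      -- decompose v
      have hv' := hgrade ▸ hvW
      obtain ⟨a, ha, b, hb, hab⟩ := Submodule.mem_sup.mp hv'
      obtain ⟨haW, haE⟩ := Submodule.mem_inf.mp ha
      obtain ⟨hbW, hbO⟩ := Submodule.mem_inf.mp hb
      rw [hmemE] at haE
      rw [hmemO] at hbO
      have hWw : ∀ c : ℂ, c ≠ 0 → ((c : ℂ), (0 : ℂ)) ∈ W → W = ⊤ := by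
        intro c hc hcW
        have hu : ((0 : ℂ), (c : ℂ)) ∈ W := by
          have := hG 1 le_rfl _ hcW
          rw [hbG] at this
          simpa using this
        apply eq_top_iff.mpr
        intro p _
        have : p = (p.1 * c⁻¹) • ((c : ℂ), (0 : ℂ)) + (p.2 * c⁻¹) • ((0 : ℂ), (c : ℂ)) := by
          simp [Prod.ext_iff, mul_assoc, inv_mul_cancel₀ hc]
        rw [this]
        exact W.add_mem (W.smul_mem _ hcW) (W.smul_mem _ hu)
      have hWu : ∀ c : ℂ, c ≠ 0 → ((0 : ℂ), (c : ℂ)) ∈ W → W = ⊤ := by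
        intro c hc hcW
        have hw : ((ψL 2 * c : ℂ), (0 : ℂ)) ∈ W := by
          have := hG 1 le_rfl _ hcW
          rw [hbG] at this
          simpa using this
        exact hWw _ (mul_ne_zero hne hc) hw
      by_cases ha0 : a.1 = 0
      · have hb0 : b.2 ≠ 0 := by
          intro hb2
          apply hv0
          rw [← hab, Prod.ext_iff]
          have : a = (a.1, a.2) := rfl
          simp [Prod.ext_iff] at *
          constructor
          · rw [ha0, hbO]; ring
          · rw [haE, hb2]; ring
        have : b = ((0 : ℂ), b.2) := by simp [Prod.ext_iff, hbO]
        exact hWu b.2 hb0 (this ▸ hbW)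
      · have : a = ((a.1 : ℂ), (0 : ℂ)) := by simp [Prod.ext_iff, haE]
        exact hWw a.1 ha0 (this ▸ haW)
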